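/- arXiv:1102.5491 — 4 statements merged into one kernel-verified Lean document; each statement's English description precedes it below -/
import Mathlib

section
/- As t → ∞, e^{−2θt} ∫_0^t X_s² ds = e^{−2θt} ∫_0^t e^{2θs} ξ_s² ds converges almost surely to ξ_∞² / (2θ), where ξ_∞ is the almost sure limit of ξ_t as t → ∞. -/
/-!
The statement is pathwise. For `c > 0` and `g` continuous with `g t → L`, the substitution
`s = t - u` gives `e^{-ct} ∫_0^t e^{cs} g(s) ds = ∫_0^t e^{-cu} g(t - u) du`, and since `g` is bounded
on `[0, ∞)`, dominated convergence (with dominating function `M e^{-cu}`) sends this to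
`L ∫_0^∞ e^{-cu} du = L / c`. Take `c = 2θ` and `g = ξ²`, using `X_s² = e^{2θs} ξ_s²`.
-/

open MeasureTheory ProbabilityTheory Real Filter

/-- The process `ξ_t = e^{−θt} B_t + θ ∫_0^t e^{−θs} B_s ds`, the pathwise
(integration-by-parts) expression for the Young integral `∫_0^t e^{−θs} dB_s`. -/
noncomputable def xiProc {Ω : Type*} (θ : ℝ) (B : ℝ → Ω → ℝ) (t : ℝ) (ω : Ω) : ℝ :=
  Real.exp (-θ * t) * B t ω + θ * ∫ s in (0:ℝ)..t, Real.exp (-θ * s) * B s ω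

/-- The fractional Ornstein–Uhlenbeck process `X_t = e^{θt} ξ_t`. -/
noncomputable def ouProc {Ω : Type*} (θ : ℝ) (B : ℝ → Ω → ℝ) (t : ℝ) (ω : Ω) : ℝ :=
  Real.exp (θ * t) * xiProc θ B t ω

open Set Topology

lemma Continuous.isBounded_image_Ici_of_tendsto {α : Type*} [PseudoMetricSpace α] {g : ℝ → α}
    (hg : Continuous g) {L : α} (hlim : Tendsto g atTop (𝓝 L)) (a : ℝ) :
    Bornology.IsBounded (g '' Ici a) := by
  obtain ⟨S, hS, hbdd⟩ := Metric.exists_isBounded_image_of_tendsto hlim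
  obtain ⟨T, hT⟩ := mem_atTop_sets.mp hS
  refine (((isCompact_Icc (a := a) (b := T)).image hg).isBounded.union hbdd).subset ?_
  rintro _ ⟨s, hs, rfl⟩
  rcases le_total s T with hsT | hTs
  · exact .inl ⟨s, ⟨hs, hsT⟩, rfl⟩
  · exact .inr ⟨s, hT s hTs, rfl⟩

lemma exp_neg_mul_mul_integral_exp_mul_eq (c : ℝ) (g : ℝ → ℝ) {t : ℝ} (ht : 0 ≤ t) :
    exp (-c * t) * ∫ s in (0:ℝ)..t, exp (c * s) * g s
      = ∫ u in Ioi 0, (Iic t).indicator (fun u => exp (-c * u) * g (t - u)) u := by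
  have hsub := intervalIntegral.integral_comp_sub_left (a := 0) (b := t)
    (fun s => exp (-c * t) * (exp (c * s) * g s)) t
  rw [sub_self, sub_zero] at hsub
  rw [setIntegral_indicator measurableSet_Iic, Ioi_inter_Iic, ← intervalIntegral.integral_of_le ht,
    ← intervalIntegral.integral_const_mul, ← hsub]
  refine intervalIntegral.integral_congr fun u _ => ?_
  simp only [← mul_assoc, ← exp_add]
  ring_nf

lemma integral_exp_neg_mul_Ioi_zero {c : ℝ} (hc : 0 < c) :
    ∫ u in Ioi (0:ℝ), exp (-c * u) = 1 / c := by
  rw [integral_exp_mul_Ioi (neg_neg_of_pos hc), mul_zero, exp_zero, neg_div_neg_eq]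

theorem tendsto_exp_neg_mul_mul_integral_exp_mul {c : ℝ} (hc : 0 < c) {g : ℝ → ℝ}
    (hg : Continuous g) {L : ℝ} (hlim : Tendsto g atTop (𝓝 L)) :
    Tendsto (fun t => exp (-c * t) * ∫ s in (0:ℝ)..t, exp (c * s) * g s) atTop (𝓝 (L / c)) := by
  obtain ⟨M, hM⟩ := isBounded_iff_forall_norm_le.mp (hg.isBounded_image_Ici_of_tendsto hlim 0)
  have hgM : ∀ s, 0 ≤ s → ‖g s‖ ≤ M := fun s hs => hM _ (mem_image_of_mem g hs)
  have hM0 : 0 ≤ M := (norm_nonneg _).trans (hgM 0 le_rfl)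
  have hlimit : ∫ u in Ioi (0:ℝ), exp (-c * u) * L = L / c := by
    rw [integral_mul_const, integral_exp_neg_mul_Ioi_zero hc, one_div_mul_eq_div]
  rw [← hlimit]
  refine (tendsto_integral_filter_of_dominated_convergence
    (F := fun t => (Iic t).indicator fun u => exp (-c * u) * g (t - u)) (fun u => M * exp (-c * u))
    ?meas ?bound ?int ?lim).congr' ?eq
  case meas =>
    exact .of_forall fun t =>
      (by fun_prop : Continuous fun u => exp (-c * u) * g (t - u)).aestronglyMeasurable.indicator
        measurableSet_Iic
  case bound =>
    refine .of_forall fun t => .of_forall fun u => ?_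
    by_cases hut : u ≤ t
    · rw [indicator_of_mem (show u ∈ Iic t from hut), norm_mul, norm_of_nonneg (exp_pos _).le,
        mul_comm]
      exact mul_le_mul_of_nonneg_right (hgM _ (sub_nonneg.mpr hut)) (exp_pos _).le
    · rw [indicator_of_notMem (show u ∉ Iic t from hut), norm_zero]
      positivity
  case int => exact (integrableOn_exp_mul_Ioi (neg_neg_of_pos hc) 0).const_mul M
  case lim =>
    refine .of_forall fun u => ?_
    refine ((hlim.comp (tendsto_atTop_add_const_right _ (-u) tendsto_id)).const_mul
      (exp (-c * u))).congr' ?_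
    filter_upwards [eventually_ge_atTop u] with t ht
    simp [indicator_of_mem (show u ∈ Iic t from ht), sub_eq_add_neg]
  case eq =>
    filter_upwards [eventually_ge_atTop 0] with t ht
    exact (exp_neg_mul_mul_integral_exp_mul_eq c g ht).symm

lemma continuous_xiProc {Ω : Type*} (θ : ℝ) {B : ℝ → Ω → ℝ} {ω : Ω}
    (hB : Continuous fun t => B t ω) : Continuous fun t => xiProc θ B t ω := by
  unfold xiProc
  refine (by fun_prop : Continuous fun t => exp (-θ * t) * B t ω).add
    (continuous_const.mul (intervalIntegral.continuous_primitive (fun _ _ => ?_) 0))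
  exact (by fun_prop : Continuous fun s => exp (-θ * s) * B s ω).intervalIntegrable _ _

lemma ouProc_sq {Ω : Type*} (θ : ℝ) (B : ℝ → Ω → ℝ) (t : ℝ) (ω : Ω) :
    ouProc θ B t ω ^ 2 = exp (2 * θ * t) * xiProc θ B t ω ^ 2 := by
  rw [ouProc, mul_pow, ← exp_nat_mul]
  ring_nf

theorem normalized_energy_tendsto_general
    {Ω : Type*} [MeasurableSpace Ω] (P : Measure Ω)
    (θ : ℝ) (hθ : 0 < θ)
    (B : ℝ → Ω → ℝ)
    (hBcont : ∀ ω : Ω, Continuous fun t : ℝ => B t ω)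
    (ξ_inf : Ω → ℝ)
    (hlim : ∀ᵐ ω ∂P, Tendsto (fun t : ℝ => xiProc θ B t ω) atTop (nhds (ξ_inf ω))) :
    ∀ᵐ ω ∂P,
      Tendsto (fun t : ℝ =>
          Real.exp (-2 * θ * t) * ∫ s in (0:ℝ)..t, (ouProc θ B s ω) ^ 2)
        atTop (nhds ((ξ_inf ω) ^ 2 / (2 * θ))) := by
  filter_upwards [hlim] with ω hω
  have h := tendsto_exp_neg_mul_mul_integral_exp_mul (mul_pos two_pos hθ)
    ((continuous_xiProc θ (hBcont ω)).pow 2) (hω.pow 2)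
  simpa only [ouProc_sq, neg_mul, Pi.pow_apply] using h

/-- If `B` is a fractional Brownian motion of Hurst index `H ∈ (1/2, 1)`, `θ > 0`,
and `ξ_∞` is the almost sure limit of `ξ_t` as `t → ∞`, then
`e^{−2θt} ∫_0^t X_s² ds = e^{−2θt} ∫_0^t e^{2θs} ξ_s² ds → ξ_∞²/(2θ)` almost surely. -/
theorem normalized_energy_tendsto
    {Ω : Type*} [MeasurableSpace Ω] (P : Measure Ω) [IsProbabilityMeasure P]
    (H θ : ℝ) (hH1 : 1 / 2 < H) (hH2 : H < 1) (hθ : 0 < θ)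
    (B : ℝ → Ω → ℝ)
    (hBmeas : ∀ t : ℝ, Measurable (B t))
    (hBcont : ∀ ω : Ω, Continuous fun t : ℝ => B t ω)
    (hB0 : ∀ ω : Ω, B 0 ω = 0)
    (hBgauss : ∀ (n : ℕ) (c : Fin n → ℝ) (t : Fin n → ℝ), (∀ i, 0 ≤ t i) →
      ∃ v : NNReal,
        Measure.map (fun ω => ∑ i, c i * B (t i) ω) P = gaussianReal 0 v)
    (hBcov : ∀ s t : ℝ, 0 ≤ s → 0 ≤ t →
      ∫ ω, B t ω * B s ω ∂P =
        (t ^ (2 * H) + s ^ (2 * H) - |t - s| ^ (2 * H)) / 2)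
    (ξ_inf : Ω → ℝ)
    (hlim : ∀ᵐ ω ∂P, Tendsto (fun t : ℝ => xiProc θ B t ω) atTop (nhds (ξ_inf ω))) :
    ∀ᵐ ω ∂P,
      Tendsto (fun t : ℝ =>
          Real.exp (-2 * θ * t) * ∫ s in (0:ℝ)..t, (ouProc θ B s ω) ^ 2)
        atTop (nhds ((ξ_inf ω) ^ 2 / (2 * θ))) :=
  normalized_energy_tendsto_general P θ hθ B hBcont ξ_inf hlim
end

section
/- For every t ≥ 0, H(2H−1) ∫_t^∞ ∫_t^∞ e^{−θr} e^{−θs} |r−s|^{2H−2} dr ds = (HΓ(2H)/θ^{2H}) · e^{−2θt}; in particular this quantity tends to 0 as t → ∞. -/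
open MeasureTheory Real Filter Set
open scoped ENNReal

/-!
Write `k(r, s) = e^{-θr} e^{-θs} |r - s|^{2H-2}`. Shifting both variables by `t` multiplies `k` by
`e^{-2θt}`, so it suffices to treat `t = 0`. There `k` is symmetric, so the double integral over
the quadrant is twice the integral over `{u < v}`; substituting `v = u + w` the inner integral
becomes `e^{-2θu} ∫_0^∞ w^{2H-2} e^{-θw} dw = e^{-2θu} Γ(2H-1) / θ^{2H-1}`, and integrating in `u`
gives `Γ(2H-1) / θ^{2H}`. Finally `(2H-1) Γ(2H-1) = Γ(2H)`. The computation is done with lower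
Lebesgue integrals, where Tonelli needs no integrability hypotheses.
-/

theorem setLIntegral_Ioi_zero_comp_add_right (g : ℝ → ℝ≥0∞) (t : ℝ) :
    ∫⁻ x in Ioi 0, g (x + t) = ∫⁻ x in Ioi t, g x := by
  have h := (measurePreserving_add_right (volume : Measure ℝ) t).setLIntegral_comp_preimage_emb
    (MeasurableEquiv.addRight t).measurableEmbedding g (Ioi t)
  simpa only [preimage_add_const_Ioi, sub_self] using h

theorem lintegral_eq_lintegral_Iio_add_lintegral_Ioi {μ : Measure ℝ} [NullSingletonClass μ]
    (f : ℝ → ℝ≥0∞) (u : ℝ) :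
    ∫⁻ v, f v ∂μ = ∫⁻ v in Iio u, f v ∂μ + ∫⁻ v in Ioi u, f v ∂μ := by
  rw [← lintegral_union measurableSet_Ioi Ioi_disjoint_Iio_same.symm,
    Iio_union_Ioi, restrict_compl_singleton]

theorem lintegral_lintegral_eq_two_mul_lintegral_lintegral_Ioi {μ : Measure ℝ} [SFinite μ]
    [NullSingletonClass μ] {F : ℝ → ℝ → ℝ≥0∞} (hF : Measurable (Function.uncurry F))
    (hsymm : ∀ u v, F u v = F v u) :
    ∫⁻ u, ∫⁻ v, F u v ∂μ ∂μ = 2 * ∫⁻ u, ∫⁻ v in Ioi u, F u v ∂μ ∂μ := by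
  set G := {p : ℝ × ℝ | p.2 < p.1}.indicator (Function.uncurry F)
  have hG : Measurable G := hF.indicator (measurableSet_lt measurable_snd measurable_fst)
  have hlower : ∀ u, ∫⁻ v in Iio u, F u v ∂μ = ∫⁻ v, G (u, v) ∂μ := fun u => by
    rw [← lintegral_indicator measurableSet_Iio]
    congr with v
  have hswap : ∫⁻ u, ∫⁻ v, G (u, v) ∂μ ∂μ = ∫⁻ u, ∫⁻ v in Ioi u, F u v ∂μ ∂μ := by
    rw [lintegral_lintegral_swap (f := fun u v => G (u, v)) hG.aemeasurable]
    refine lintegral_congr fun u => ?_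
    rw [← lintegral_indicator measurableSet_Ioi]
    congr with v
    simp only [G, indicator_apply, mem_ofPred_eq, mem_Ioi, Function.uncurry_apply_pair, hsymm u v]
  calc ∫⁻ u, ∫⁻ v, F u v ∂μ ∂μ
      = ∫⁻ u, (∫⁻ v, G (u, v) ∂μ + ∫⁻ v in Ioi u, F u v ∂μ) ∂μ := by
        refine lintegral_congr fun u => ?_
        rw [lintegral_eq_lintegral_Iio_add_lintegral_Ioi _ u, hlower]
    _ = 2 * ∫⁻ u, ∫⁻ v in Ioi u, F u v ∂μ ∂μ := by
        rw [lintegral_add_left hG.lintegral_prod_right', hswap, two_mul]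

theorem integral_integral_eq_toReal_lintegral_lintegral {α β : Type*} [MeasurableSpace α]
    [MeasurableSpace β] {μ : Measure α} {ν : Measure β} [SFinite ν] {f : α → β → ℝ}
    (hf : Measurable (Function.uncurry f)) (hf0 : ∀ x y, 0 ≤ f x y)
    (hfin : ∫⁻ x, ∫⁻ y, ENNReal.ofReal (f x y) ∂ν ∂μ ≠ ∞) :
    ∫ x, ∫ y, f x y ∂ν ∂μ = (∫⁻ x, ∫⁻ y, ENNReal.ofReal (f x y) ∂ν ∂μ).toReal := by
  have hinner : Measurable fun x => ∫⁻ y, ENNReal.ofReal (f x y) ∂ν :=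
    hf.ennreal_ofReal.lintegral_prod_right'
  have hslice : ∀ x, ∫ y, f x y ∂ν = (∫⁻ y, ENNReal.ofReal (f x y) ∂ν).toReal := fun x =>
    integral_eq_lintegral_of_nonneg_ae (.of_forall (hf0 x))
      (hf.comp measurable_prodMk_left).aestronglyMeasurable
  simp_rw [hslice]
  exact integral_toReal hinner.aemeasurable (ae_lt_top hinner hfin)

theorem lintegral_Ioi_zero_rpow_mul_exp_neg_mul {c b : ℝ} (hc : -1 < c) (hb : 0 < b) :
    ∫⁻ x in Ioi 0, ENNReal.ofReal (x ^ c * exp (-(b * x)))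
      = ENNReal.ofReal (Gamma (c + 1) / b ^ (c + 1)) := by
  have hint : IntegrableOn (fun x : ℝ => x ^ c * exp (-(b * x))) (Ioi 0) := by
    simpa only [rpow_one, neg_mul] using integrableOn_rpow_mul_exp_neg_mul_rpow hc zero_lt_one hb
  rw [← ofReal_integral_eq_lintegral_ofReal hint, ← add_sub_cancel_right c 1,
    integral_rpow_mul_exp_neg_mul_Ioi (by linarith) hb, add_sub_cancel_right,
    one_div, inv_rpow hb.le, inv_mul_eq_div]
  exact (ae_restrict_iff' measurableSet_Ioi).2 <| .of_forall fun x hx =>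
    mul_nonneg (rpow_nonneg (le_of_lt hx) c) (exp_pos _).le

theorem lintegral_Ioi_zero_exp_neg_mul {b : ℝ} (hb : 0 < b) :
    ∫⁻ x in Ioi 0, ENNReal.ofReal (exp (-(b * x))) = ENNReal.ofReal b⁻¹ := by
  simpa using lintegral_Ioi_zero_rpow_mul_exp_neg_mul (c := 0) (by norm_num) hb

noncomputable def expKernel (θ c r s : ℝ) : ℝ := exp (-θ * r) * exp (-θ * s) * |r - s| ^ c

theorem measurable_expKernel (θ c : ℝ) : Measurable (Function.uncurry (expKernel θ c)) := by
  unfold expKernel; fun_prop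

theorem expKernel_comm (θ c r s : ℝ) : expKernel θ c r s = expKernel θ c s r := by
  rw [expKernel, expKernel, abs_sub_comm]
  ring

theorem expKernel_add_right (θ c r s t : ℝ) :
    expKernel θ c (r + t) (s + t) = exp (-2 * θ * t) * expKernel θ c r s := by
  simp only [expKernel, add_sub_add_right_eq_sub]
  rw [show -2 * θ * t = -θ * t + -θ * t by ring, exp_add, mul_add, mul_add, exp_add, exp_add]
  ring

theorem expKernel_add_left_of_pos {θ c w : ℝ} (hw : 0 < w) (u : ℝ) :
    expKernel θ c u (w + u) = exp (-2 * θ * u) * (w ^ c * exp (-(θ * w))) := by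
  have h := expKernel_add_right θ c 0 w u
  rw [zero_add] at h
  rw [h, expKernel]
  simp only [mul_zero, exp_zero, one_mul, zero_sub, abs_neg, abs_of_pos hw, neg_mul]
  ring

theorem expKernel_nonneg (θ c r s : ℝ) : 0 ≤ expKernel θ c r s := by
  unfold expKernel; positivity

section

variable {θ c : ℝ}

theorem lintegral_Ioi_expKernel (hθ : 0 < θ) (hc : -1 < c) (u : ℝ) :
    ∫⁻ v in Ioi u, ENNReal.ofReal (expKernel θ c u v)
      = ENNReal.ofReal (exp (-2 * θ * u)) * ENNReal.ofReal (Gamma (c + 1) / θ ^ (c + 1)) := by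
  rw [← setLIntegral_Ioi_zero_comp_add_right, ← lintegral_Ioi_zero_rpow_mul_exp_neg_mul hc hθ,
    ← lintegral_const_mul' _ _ ENNReal.ofReal_ne_top]
  refine setLIntegral_congr_fun measurableSet_Ioi fun w hw => ?_
  rw [expKernel_add_left_of_pos hw, ENNReal.ofReal_mul (exp_pos _).le]

theorem lintegral_lintegral_Ioi_zero_expKernel (hθ : 0 < θ) (hc : -1 < c) :
    ∫⁻ u in Ioi 0, ∫⁻ v in Ioi 0, ENNReal.ofReal (expKernel θ c u v)
      = ENNReal.ofReal (Gamma (c + 1) / θ ^ (c + 2)) := by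
  rw [lintegral_lintegral_eq_two_mul_lintegral_lintegral_Ioi
      (F := fun u v => ENNReal.ofReal (expKernel θ c u v))
      (measurable_expKernel θ c).ennreal_ofReal fun u v => by rw [expKernel_comm]]
  have hinner : ∀ u ∈ Ioi (0 : ℝ), ∫⁻ v in Ioi u, ENNReal.ofReal (expKernel θ c u v)
      ∂volume.restrict (Ioi 0) = ENNReal.ofReal (exp (-(2 * θ * u))) *
        ENNReal.ofReal (Gamma (c + 1) / θ ^ (c + 1)) := fun u hu => by
    rw [Measure.restrict_restrict measurableSet_Ioi,
      inter_eq_left.2 (Ioi_subset_Ioi hu.le), lintegral_Ioi_expKernel hθ hc, neg_mul, neg_mul]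
  rw [setLIntegral_congr_fun measurableSet_Ioi hinner,
    lintegral_mul_const' _ _ ENNReal.ofReal_ne_top, lintegral_Ioi_zero_exp_neg_mul (by positivity)]
  have hconst : Gamma (c + 1) / θ ^ (c + 2) = 2 * ((2 * θ)⁻¹ * (Gamma (c + 1) / θ ^ (c + 1))) := by
    rw [show c + 2 = c + 1 + 1 by ring, rpow_add_one hθ.ne']
    field_simp
  rw [hconst, ENNReal.ofReal_mul zero_le_two, ENNReal.ofReal_mul (by positivity),
    ENNReal.ofReal_ofNat]

theorem lintegral_lintegral_Ioi_expKernel (hθ : 0 < θ) (hc : -1 < c) (t : ℝ) :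
    ∫⁻ r in Ioi t, ∫⁻ s in Ioi t, ENNReal.ofReal (expKernel θ c r s)
      = ENNReal.ofReal (exp (-2 * θ * t) * (Gamma (c + 1) / θ ^ (c + 2))) := by
  simp_rw [← setLIntegral_Ioi_zero_comp_add_right _ t, expKernel_add_right,
    ENNReal.ofReal_mul (exp_pos _).le, lintegral_const_mul' _ _ ENNReal.ofReal_ne_top,
    lintegral_lintegral_Ioi_zero_expKernel hθ hc]

theorem integral_integral_Ioi_expKernel (hθ : 0 < θ) (hc : -1 < c) (t : ℝ) :
    ∫ r in Ioi t, ∫ s in Ioi t, expKernel θ c r s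
      = exp (-2 * θ * t) * (Gamma (c + 1) / θ ^ (c + 2)) := by
  have hval := lintegral_lintegral_Ioi_expKernel hθ hc t
  have hΓ : 0 < Gamma (c + 1) := Gamma_pos_of_pos (by linarith)
  rw [integral_integral_eq_toReal_lintegral_lintegral (measurable_expKernel θ c)
      (expKernel_nonneg θ c) (hval ▸ ENNReal.ofReal_ne_top), hval,
    ENNReal.toReal_ofReal (by positivity)]

end

theorem tail_double_integral_eq_and_tendsto_general
    (H θ : ℝ) (hH1 : 1 / 2 < H) (hθ : 0 < θ) :
    (∀ t : ℝ, 0 ≤ t →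
      H * (2 * H - 1) *
          ∫ r in Set.Ioi t, ∫ s in Set.Ioi t,
            Real.exp (-θ * r) * Real.exp (-θ * s) * |r - s| ^ (2 * H - 2) =
        (H * Real.Gamma (2 * H) / θ ^ (2 * H)) * Real.exp (-2 * θ * t)) ∧
    Tendsto (fun t : ℝ =>
        H * (2 * H - 1) *
          ∫ r in Set.Ioi t, ∫ s in Set.Ioi t,
            Real.exp (-θ * r) * Real.exp (-θ * s) * |r - s| ^ (2 * H - 2))
      atTop (nhds 0) := by
  have hGamma : (2 * H - 1) * Gamma (2 * H - 1) = Gamma (2 * H) := by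
    rw [← Gamma_add_one (by linarith), sub_add_cancel]
  have hformula : ∀ t : ℝ, H * (2 * H - 1) * ∫ r in Ioi t, ∫ s in Ioi t, expKernel θ (2 * H - 2) r s
      = H * Gamma (2 * H) / θ ^ (2 * H) * exp (-2 * θ * t) := fun t => by
    rw [integral_integral_Ioi_expKernel hθ (by linarith), show 2 * H - 2 + 1 = 2 * H - 1 by ring,
      show 2 * H - 2 + 2 = 2 * H by ring, ← hGamma]
    ring
  refine ⟨fun t _ => hformula t, ?_⟩
  refine Tendsto.congr (fun t => (hformula t).symm) ?_
  have hexp : Tendsto (fun t => exp (-2 * θ * t)) atTop (nhds 0) :=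
    tendsto_exp_atBot.comp (tendsto_id.const_mul_atTop_of_neg (by linarith))
  simpa only [mul_zero] using hexp.const_mul (H * Gamma (2 * H) / θ ^ (2 * H))

/-- For `1/2 < H < 1` and `θ > 0`: for every `t ≥ 0`,
`H(2H−1) ∫_t^∞ ∫_t^∞ e^{−θr} e^{−θs} |r−s|^{2H−2} dr ds = (HΓ(2H)/θ^{2H}) e^{−2θt}`;
in particular this quantity tends to `0` as `t → ∞`. -/
theorem tail_double_integral_eq_and_tendsto
    (H θ : ℝ) (hH1 : 1 / 2 < H) (hH2 : H < 1) (hθ : 0 < θ) :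
    (∀ t : ℝ, 0 ≤ t →
      H * (2 * H - 1) *
          ∫ r in Set.Ioi t, ∫ s in Set.Ioi t,
            Real.exp (-θ * r) * Real.exp (-θ * s) * |r - s| ^ (2 * H - 2) =
        (H * Real.Gamma (2 * H) / θ ^ (2 * H)) * Real.exp (-2 * θ * t)) ∧
    Tendsto (fun t : ℝ =>
        H * (2 * H - 1) *
          ∫ r in Set.Ioi t, ∫ s in Set.Ioi t,
            Real.exp (-θ * r) * Real.exp (-θ * s) * |r - s| ^ (2 * H - 2))
      atTop (nhds 0) :=
  tail_double_integral_eq_and_tendsto_general H θ hH1 hθ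
end

section
/- For every α with 1/2 < α < H, H(2H−1) ∫_0^∞ ∫_0^∞ u^{−α} v^{−α} e^{−θu} e^{−θv} |u−v|^{2H−2} du dv ≤ 2H(2H−1) Γ(2H−2α) Β(2H−1, 1−α) / θ^{2H−2α} < ∞, where Β denotes the Beta function. -/
/-!
The integrand `u^a v^a e^{-θu} e^{-θv} |u - v|^b` (here `a = -α`, `b = 2H - 2`) is symmetric in
`(u, v)`, so the double integral is at most twice the integral over `v ≤ u`. There
`e^{-θv} ≤ 1`, and the substitution `v = u x` gives
`∫_0^u v^a (u - v)^b dv = u^{a+b+1} Β(a+1, b+1)`, which leaves the Gamma integral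
`∫_0^∞ u^{2a+b+1} e^{-θu} du = Γ(2a+b+2) / θ^{2a+b+2}`.
-/

open MeasureTheory Real Set

theorem intervalIntegrable_rpow_mul_sub_rpow {a b : ℝ} (ha : -1 < a) (hb : -1 < b) (u : ℝ) :
    IntervalIntegrable (fun v : ℝ => v ^ a * (u - v) ^ b) volume 0 u := by
  rcases eq_or_ne u 0 with rfl | hu
  · exact IntervalIntegrable.refl
  refine IntervalIntegrable.trans (b := u / 2) ?_ ?_
  · refine (intervalIntegral.intervalIntegrable_rpow' ha).mul_continuousOn
      (ContinuousOn.rpow_const (by fun_prop) fun v hv => Or.inl (sub_ne_zero.mpr ?_))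
    rintro rfl
    rcases mem_uIcc.mp hv with h | h <;> exact hu (by linarith [h.1, h.2])
  · have := (intervalIntegral.intervalIntegrable_rpow' hb (a := u / 2) (b := 0)).comp_sub_left u
    rw [sub_half, sub_zero] at this
    refine this.continuousOn_mul (ContinuousOn.rpow_const continuousOn_id fun v hv => Or.inl ?_)
    rintro rfl
    rcases mem_uIcc.mp hv with h | h <;> exact hu (by linarith [h.1, h.2])

theorem integral_rpow_mul_sub_rpow (a b : ℝ) {u : ℝ} (hu : 0 < u) :
    ∫ v in (0:ℝ)..u, v ^ a * (u - v) ^ b =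
      u ^ (a + b + 1) * ∫ x in (0:ℝ)..1, x ^ a * (1 - x) ^ b := by
  have hscale : ∀ v ∈ uIcc 0 u,
      v ^ a * (u - v) ^ b = u ^ (a + b) * ((v / u) ^ a * (1 - v / u) ^ b) := by
    intro v hv
    rw [uIcc_of_le hu.le] at hv
    rw [one_sub_div hu.ne', div_rpow hv.1 hu.le, div_rpow (sub_nonneg.2 hv.2) hu.le, rpow_add hu]
    field_simp
  rw [intervalIntegral.integral_congr hscale, intervalIntegral.integral_const_mul,
    intervalIntegral.integral_comp_div (fun x => x ^ a * (1 - x) ^ b) hu.ne', zero_div,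
    div_self hu.ne', rpow_add_one hu.ne', smul_eq_mul, mul_assoc]

theorem lintegral_Ioc_rpow_mul_sub_rpow {a b u : ℝ} (ha : -1 < a) (hb : -1 < b) (hu : 0 < u) :
    ∫⁻ v in Ioc 0 u, ENNReal.ofReal (v ^ a * (u - v) ^ b) =
      ENNReal.ofReal (u ^ (a + b + 1) * ∫ x in (0:ℝ)..1, x ^ a * (1 - x) ^ b) := by
  rw [← integral_rpow_mul_sub_rpow a b hu, intervalIntegral.integral_of_le hu.le,
    ofReal_integral_eq_lintegral_ofReal (intervalIntegrable_rpow_mul_sub_rpow ha hb u).1]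
  filter_upwards [ae_restrict_mem measurableSet_Ioc] with v hv
  exact mul_nonneg (rpow_nonneg hv.1.le _) (rpow_nonneg (sub_nonneg.2 hv.2) _)

theorem integral_rpow_mul_one_sub_rpow_comm (a b : ℝ) :
    ∫ x in (0:ℝ)..1, x ^ a * (1 - x) ^ b = ∫ x in (0:ℝ)..1, x ^ b * (1 - x) ^ a := by
  have := intervalIntegral.integral_comp_sub_left (fun x : ℝ => x ^ b * (1 - x) ^ a)
    (a := 0) (b := 1) (1 : ℝ)
  simpa [mul_comm] using this

theorem lintegral_Ioi_rpow_mul_exp_neg_mul {s θ : ℝ} (hs : 0 < s) (hθ : 0 < θ) :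
    ∫⁻ u in Ioi 0, ENNReal.ofReal (u ^ (s - 1) * exp (-θ * u)) =
      ENNReal.ofReal (Gamma s / θ ^ s) := by
  have hint : IntegrableOn (fun u : ℝ => u ^ (s - 1) * exp (-θ * u)) (Ioi 0) := by
    simpa using integrableOn_rpow_mul_exp_neg_mul_rpow (s := s - 1) (by linarith) one_pos hθ
  have hnonneg : 0 ≤ᵐ[volume.restrict (Ioi 0)] fun u : ℝ => u ^ (s - 1) * exp (-θ * u) := by
    filter_upwards [ae_restrict_mem measurableSet_Ioi] with u hu
    exact mul_nonneg (rpow_nonneg (le_of_lt hu) _) (exp_pos _).le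
  rw [← ofReal_integral_eq_lintegral_ofReal hint hnonneg]
  simp_rw [neg_mul]
  rw [integral_rpow_mul_exp_neg_mul_Ioi hs hθ, one_div, inv_rpow hθ.le, inv_mul_eq_div]

theorem lintegral_prod_le_two_mul_lintegral_Iic {α : Type*} [MeasurableSpace α] [LinearOrder α]
    [TopologicalSpace α] [OrderClosedTopology α] [SecondCountableTopology α]
    [OpensMeasurableSpace α] (μ : Measure α) [SFinite μ] {g : α × α → ENNReal}
    (hg : Measurable g) (hsymm : ∀ p, g p.swap = g p) :
    ∫⁻ p, g p ∂μ.prod μ ≤ 2 * ∫⁻ u, ∫⁻ v in Iic u, g (u, v) ∂μ ∂μ := by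
  set below := {p : α × α | p.2 ≤ p.1}
  have hbelow : MeasurableSet below := measurableSet_le measurable_snd measurable_fst
  have hsplit : ∀ p, g p ≤ below.indicator g p + below.indicator g p.swap := by
    intro p
    rcases le_total p.2 p.1 with h | h
    · rw [indicator_of_mem (show p ∈ below from h)]; exact le_self_add
    · rw [indicator_of_mem (show p.swap ∈ below from h), hsymm]; exact le_add_self
  calc ∫⁻ p, g p ∂μ.prod μ
      ≤ ∫⁻ p, below.indicator g p + below.indicator g p.swap ∂μ.prod μ :=
        lintegral_mono hsplit
    _ = 2 * ∫⁻ p, below.indicator g p ∂μ.prod μ := by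
        rw [lintegral_add_left (hg.indicator hbelow), lintegral_prod_swap, two_mul]
    _ = 2 * ∫⁻ u, ∫⁻ v in Iic u, g (u, v) ∂μ ∂μ := by
        rw [lintegral_prod _ (hg.indicator hbelow).aemeasurable]
        congr 1
        refine lintegral_congr fun u => ?_
        rw [← lintegral_indicator measurableSet_Iic]
        rfl

theorem integrable_and_integral_le_of_lintegral_ofReal_le {X : Type*} [MeasurableSpace X]
    {μ : Measure X} {f : X → ℝ} {C : ℝ} (hf : AEStronglyMeasurable f μ) (hf0 : 0 ≤ᵐ[μ] f)
    (hC : 0 ≤ C) (h : ∫⁻ x, ENNReal.ofReal (f x) ∂μ ≤ ENNReal.ofReal C) :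
    Integrable f μ ∧ ∫ x, f x ∂μ ≤ C :=
  ⟨⟨hf, (hasFiniteIntegral_iff_ofReal hf0).2 (h.trans_lt ENNReal.ofReal_lt_top)⟩, by
    rw [integral_eq_lintegral_of_nonneg_ae hf0 hf]
    exact ENNReal.toReal_le_of_le_ofReal hC h⟩

theorem integral_rpow_mul_one_sub_rpow_nonneg {a b : ℝ} :
    0 ≤ ∫ x in (0:ℝ)..1, x ^ a * (1 - x) ^ b :=
  intervalIntegral.integral_nonneg zero_le_one fun _ hx =>
    mul_nonneg (rpow_nonneg hx.1 _) (rpow_nonneg (sub_nonneg.2 hx.2) _)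

noncomputable def weightedKernel (a b θ : ℝ) (p : ℝ × ℝ) : ℝ :=
  p.1 ^ a * p.2 ^ a * exp (-θ * p.1) * exp (-θ * p.2) * |p.1 - p.2| ^ b

section weightedKernel

variable {a b θ : ℝ}

theorem weightedKernel_swap (p : ℝ × ℝ) :
    weightedKernel a b θ p.swap = weightedKernel a b θ p := by
  simp only [weightedKernel, Prod.fst_swap, Prod.snd_swap, abs_sub_comm p.2]
  ring

theorem weightedKernel_nonneg {p : ℝ × ℝ} (hp : p ∈ Ioi 0 ×ˢ Ioi 0) :
    0 ≤ weightedKernel a b θ p := by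
  have : 0 < p.1 := hp.1
  have : 0 < p.2 := hp.2
  unfold weightedKernel
  positivity

theorem lintegral_Ioc_weightedKernel_le (ha : -1 < a) (hb : -1 < b) (hθ : 0 ≤ θ) {u : ℝ}
    (hu : 0 < u) :
    ∫⁻ v in Ioc 0 u, ENNReal.ofReal (weightedKernel a b θ (u, v)) ≤
      ENNReal.ofReal (∫ x in (0:ℝ)..1, x ^ a * (1 - x) ^ b) *
        ENNReal.ofReal (u ^ (2 * a + b + 1) * exp (-θ * u)) := by
  calc ∫⁻ v in Ioc 0 u, ENNReal.ofReal (weightedKernel a b θ (u, v))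
      ≤ ∫⁻ v in Ioc 0 u,
          ENNReal.ofReal (u ^ a * exp (-θ * u)) * ENNReal.ofReal (v ^ a * (u - v) ^ b) := by
        refine setLIntegral_mono' measurableSet_Ioc fun v hv => ?_
        rw [← ENNReal.ofReal_mul (by positivity)]
        refine ENNReal.ofReal_le_ofReal ?_
        have hexp : exp (-θ * v) ≤ 1 := exp_le_one_iff.2 (by nlinarith [hv.1])
        have hvu := sub_nonneg.2 hv.2
        have hv0 := hv.1
        rw [weightedKernel, abs_of_nonneg hvu]
        calc u ^ a * v ^ a * exp (-θ * u) * exp (-θ * v) * (u - v) ^ b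
            = u ^ a * exp (-θ * u) * (v ^ a * (u - v) ^ b) * exp (-θ * v) := by ring
          _ ≤ u ^ a * exp (-θ * u) * (v ^ a * (u - v) ^ b) :=
            mul_le_of_le_one_right (by positivity) hexp
    _ = ENNReal.ofReal (∫ x in (0:ℝ)..1, x ^ a * (1 - x) ^ b) *
          ENNReal.ofReal (u ^ (2 * a + b + 1) * exp (-θ * u)) := by
        rw [lintegral_const_mul' _ _ ENNReal.ofReal_ne_top,
          lintegral_Ioc_rpow_mul_sub_rpow ha hb hu, ← ENNReal.ofReal_mul (by positivity),
          ← ENNReal.ofReal_mul integral_rpow_mul_one_sub_rpow_nonneg]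
        congr 1
        rw [show 2 * a + b + 1 = a + (a + b + 1) by ring, rpow_add hu a]
        ring

theorem lintegral_weightedKernel_le (ha : -1 < a) (hb : -1 < b) (hs : 0 < 2 * a + b + 2)
    (hθ : 0 < θ) :
    ∫⁻ p in Ioi 0 ×ˢ Ioi 0, ENNReal.ofReal (weightedKernel a b θ p) ≤
      ENNReal.ofReal (2 * Gamma (2 * a + b + 2) * (∫ x in (0:ℝ)..1, x ^ a * (1 - x) ^ b) /
        θ ^ (2 * a + b + 2)) := by
  set B := ∫ x in (0:ℝ)..1, x ^ a * (1 - x) ^ b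
  set μ := volume.restrict (Ioi (0:ℝ))
  have hgamma := lintegral_Ioi_rpow_mul_exp_neg_mul hs hθ
  rw [show 2 * a + b + 2 - 1 = 2 * a + b + 1 by ring] at hgamma
  rw [Measure.volume_eq_prod, ← Measure.prod_restrict]
  calc ∫⁻ p, ENNReal.ofReal (weightedKernel a b θ p) ∂μ.prod μ
      ≤ 2 * ∫⁻ u, ∫⁻ v in Iic u,
          ENNReal.ofReal (weightedKernel a b θ (u, v)) ∂μ ∂μ :=
        lintegral_prod_le_two_mul_lintegral_Iic μ (by unfold weightedKernel; fun_prop)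
          fun p => by rw [weightedKernel_swap]
    _ ≤ 2 * ∫⁻ u in Ioi 0,
          ENNReal.ofReal B * ENNReal.ofReal (u ^ (2 * a + b + 1) * exp (-θ * u)) := by
        gcongr 1
        refine setLIntegral_mono' measurableSet_Ioi fun u hu => ?_
        rw [Measure.restrict_restrict measurableSet_Iic, Iic_inter_Ioi]
        exact lintegral_Ioc_weightedKernel_le ha hb hθ.le hu
    _ = ENNReal.ofReal (2 * Gamma (2 * a + b + 2) * B / θ ^ (2 * a + b + 2)) := by
        rw [lintegral_const_mul' _ _ ENNReal.ofReal_ne_top, hgamma,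
          ← ENNReal.ofReal_mul integral_rpow_mul_one_sub_rpow_nonneg, ← ENNReal.ofReal_ofNat 2,
          ← ENNReal.ofReal_mul zero_le_two]
        congr 1
        ring

theorem integrableOn_weightedKernel_and_integral_le (ha : -1 < a) (hb : -1 < b)
    (hs : 0 < 2 * a + b + 2) (hθ : 0 < θ) :
    IntegrableOn (weightedKernel a b θ) (Ioi 0 ×ˢ Ioi 0) ∧
      ∫ u in Ioi (0:ℝ), ∫ v in Ioi (0:ℝ), weightedKernel a b θ (u, v) ≤
        2 * Gamma (2 * a + b + 2) * (∫ x in (0:ℝ)..1, x ^ a * (1 - x) ^ b) /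
          θ ^ (2 * a + b + 2) := by
  obtain ⟨hint, hle⟩ := integrable_and_integral_le_of_lintegral_ofReal_le
    (by unfold weightedKernel; fun_prop)
    ((ae_restrict_mem (measurableSet_Ioi.prod measurableSet_Ioi)).mono
      fun _ => weightedKernel_nonneg)
    (by have := integral_rpow_mul_one_sub_rpow_nonneg (a := a) (b := b); positivity)
    (lintegral_weightedKernel_le ha hb hs hθ)
  rw [Measure.volume_eq_prod] at hint hle
  exact ⟨hint, (setIntegral_prod _ hint).symm.trans_le hle⟩

end weightedKernel

theorem weighted_improper_double_integral_bound_general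
    (H θ : ℝ) (hH1 : 1 / 2 < H) (hH2 : H < 1) (hθ : 0 < θ)
    (α : ℝ) (hα2 : α < H) :
    IntegrableOn
        (fun p : ℝ × ℝ => p.1 ^ (-α) * p.2 ^ (-α) *
          Real.exp (-θ * p.1) * Real.exp (-θ * p.2) * |p.1 - p.2| ^ (2 * H - 2))
        (Set.Ioi 0 ×ˢ Set.Ioi 0) volume ∧
    H * (2 * H - 1) *
        ∫ u in Set.Ioi (0:ℝ), ∫ v in Set.Ioi (0:ℝ),
          u ^ (-α) * v ^ (-α) * Real.exp (-θ * u) * Real.exp (-θ * v) *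
            |u - v| ^ (2 * H - 2) ≤
      2 * H * (2 * H - 1) * Real.Gamma (2 * H - 2 * α) *
          (∫ x in (0:ℝ)..1, x ^ (2 * H - 1 - 1) * (1 - x) ^ (1 - α - 1)) /
        θ ^ (2 * H - 2 * α) := by
  obtain ⟨hint, hle⟩ := integrableOn_weightedKernel_and_integral_le (a := -α) (b := 2 * H - 2)
    (by linarith) (by linarith) (by linarith) hθ
  have hbeta : ∫ x in (0:ℝ)..1, x ^ (2 * H - 1 - 1) * (1 - x) ^ (1 - α - 1) =
      ∫ x in (0:ℝ)..1, x ^ (-α) * (1 - x) ^ (2 * H - 2) := by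
    rw [integral_rpow_mul_one_sub_rpow_comm]
    ring_nf
  rw [show 2 * -α + (2 * H - 2) + 2 = 2 * H - 2 * α by ring] at hle
  refine ⟨hint, ?_⟩
  calc _ ≤ H * (2 * H - 1) * (2 * Gamma (2 * H - 2 * α) *
          (∫ x in (0:ℝ)..1, x ^ (-α) * (1 - x) ^ (2 * H - 2)) / θ ^ (2 * H - 2 * α)) :=
        mul_le_mul_of_nonneg_left hle (by nlinarith)
    _ = _ := by rw [hbeta]; ring

/-- For `1/2 < H < 1`, `θ > 0` and every `α` with `1/2 < α < H`,
`H(2H−1) ∫_0^∞ ∫_0^∞ u^{−α} v^{−α} e^{−θu} e^{−θv} |u−v|^{2H−2} du dv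
  ≤ 2H(2H−1) Γ(2H−2α) Β(2H−1, 1−α) / θ^{2H−2α} < ∞`,
where `Β(a,b) = ∫_0^1 x^{a−1}(1−x)^{b−1} dx`.  Finiteness is expressed by
integrability of the (nonnegative) integrand on `(0,∞)²`. -/
theorem weighted_improper_double_integral_bound
    (H θ : ℝ) (hH1 : 1 / 2 < H) (hH2 : H < 1) (hθ : 0 < θ)
    (α : ℝ) (hα1 : 1 / 2 < α) (hα2 : α < H) :
    IntegrableOn
        (fun p : ℝ × ℝ => p.1 ^ (-α) * p.2 ^ (-α) *
          Real.exp (-θ * p.1) * Real.exp (-θ * p.2) * |p.1 - p.2| ^ (2 * H - 2))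
        (Set.Ioi 0 ×ˢ Set.Ioi 0) volume ∧
    H * (2 * H - 1) *
        ∫ u in Set.Ioi (0:ℝ), ∫ v in Set.Ioi (0:ℝ),
          u ^ (-α) * v ^ (-α) * Real.exp (-θ * u) * Real.exp (-θ * v) *
            |u - v| ^ (2 * H - 2) ≤
      2 * H * (2 * H - 1) * Real.Gamma (2 * H - 2 * α) *
          (∫ x in (0:ℝ)..1, x ^ (2 * H - 1 - 1) * (1 - x) ^ (1 - α - 1)) /
        θ ^ (2 * H - 2 * α) :=
  weighted_improper_double_integral_bound_general H θ hH1 hH2 hθ α hα2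
end

section
/- For every t > 0, H(2H−1) e^{−2θt} ∫_0^t ∫_0^t e^{θs} e^{θr} |s−r|^{2H−2} dr ds = (H(2H−1)/θ) ( ∫_0^t r^{2H−2} e^{−θr} dr − e^{−2θt} ∫_0^t r^{2H−2} e^{θr} dr ). -/
/-!
Write `F_c(x) = ∫_0^x u^p e^{cu} du` with `p = 2H - 2 > -1`. Splitting the inner integral at
`r = s` and substituting `u = |s - r|` turns it into `e^{2θs} (F_{-θ}(s) + F_θ(t - s))`.
Reflecting `s ↦ t - s` in the second term, both outer integrals have the form
`∫_0^t e^{as} F_b(s) ds`, which integration by parts evaluates as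
`(e^{at} F_b(t) - F_{a+b}(t)) / a`. With `(a, b) = (2θ, -θ)` and `(-2θ, θ)` the terms combine to
`θ ∫∫ = e^{2θt} F_{-θ}(t) - F_θ(t)`.
-/

open MeasureTheory Real Set intervalIntegral

section

variable {p : ℝ}

lemma intervalIntegrable_abs_rpow (hp : -1 < p) (a b : ℝ) :
    IntervalIntegrable (fun x => |x| ^ p) volume a b := by
  have of_nonneg : ∀ c, 0 ≤ c → IntervalIntegrable (fun x => |x| ^ p) volume 0 c := by
    intro c hc
    refine (intervalIntegrable_rpow' hp).congr fun x hx => ?_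
    rw [uIoc_of_le hc] at hx
    simp only [abs_of_pos hx.1]
  have from_zero : ∀ c, IntervalIntegrable (fun x => |x| ^ p) volume 0 c := by
    intro c
    rcases le_total 0 c with hc | hc
    · exact of_nonneg c hc
    · rw [IntervalIntegrable.iff_comp_neg]
      simpa only [abs_neg, neg_zero] using of_nonneg (-c) (neg_nonneg.mpr hc)
  exact (from_zero a).symm.trans (from_zero b)

lemma intervalIntegrable_abs_rpow_mul_exp (hp : -1 < p) (c a b : ℝ) :
    IntervalIntegrable (fun u => |u| ^ p * exp (c * u)) volume a b :=
  (intervalIntegrable_abs_rpow hp a b).mul_continuousOn (by fun_prop)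

lemma intervalIntegrable_rpow_mul_exp (hp : -1 < p) (c a b : ℝ) :
    IntervalIntegrable (fun u => u ^ p * exp (c * u)) volume a b :=
  (intervalIntegrable_rpow' hp).mul_continuousOn (by fun_prop)

lemma continuous_integral_rpow_mul_exp (hp : -1 < p) (c : ℝ) :
    Continuous fun x => ∫ u in (0:ℝ)..x, u ^ p * exp (c * u) :=
  continuous_primitive (intervalIntegrable_rpow_mul_exp hp c) 0

lemma hasDerivAt_integral_rpow_mul_exp (hp : -1 < p) (c : ℝ) {x : ℝ} (hx : x ≠ 0) :
    HasDerivAt (fun y => ∫ u in (0:ℝ)..y, u ^ p * exp (c * u)) (x ^ p * exp (c * x)) x := by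
  have hcont : ContinuousAt (fun u => u ^ p * exp (c * u)) x :=
    (continuousAt_rpow_const x p (Or.inl hx)).mul (by fun_prop)
  have hmeas : Measurable fun u : ℝ => u ^ p * exp (c * u) := by fun_prop
  exact integral_hasDerivAt_right (intervalIntegrable_rpow_mul_exp hp c 0 x)
    hmeas.stronglyMeasurable.stronglyMeasurableAtFilter hcont

lemma integral_abs_rpow_mul_exp_of_nonneg (c : ℝ) {x : ℝ} (hx : 0 ≤ x) :
    ∫ u in (0:ℝ)..x, |u| ^ p * exp (c * u) = ∫ u in (0:ℝ)..x, u ^ p * exp (c * u) :=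
  integral_congr fun u hu => by
    rw [uIcc_of_le hx] at hu
    simp only [abs_of_nonneg hu.1]

lemma mul_integral_exp_mul_integral_rpow_mul_exp (hp : -1 < p) (a b t : ℝ) :
    a * ∫ s in (0:ℝ)..t, exp (a * s) * ∫ u in (0:ℝ)..s, u ^ p * exp (b * u) =
      exp (a * t) * (∫ u in (0:ℝ)..t, u ^ p * exp (b * u)) -
        ∫ u in (0:ℝ)..t, u ^ p * exp ((a + b) * u) := by
  have hne : ∀ x ∈ Ioo (min 0 t) (max 0 t), x ≠ 0 := by
    rintro x hx rfl
    rcases le_total 0 t with ht | ht <;> simp_all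
  have parts := integral_mul_deriv_eq_deriv_mul_of_hasDerivAt
    (u := fun s => ∫ u in (0:ℝ)..s, u ^ p * exp (b * u)) (v := fun s => exp (a * s))
    (v' := fun s => exp (a * s) * a)
    (continuous_integral_rpow_mul_exp hp b).continuousOn (by fun_prop)
    (fun x hx => hasDerivAt_integral_rpow_mul_exp hp b (hne x hx))
    (fun x _ => by simpa using ((hasDerivAt_id x).const_mul a).exp)
    (intervalIntegrable_rpow_mul_exp hp b 0 t)
    ((by fun_prop : Continuous _).intervalIntegrable 0 t)
  have hexp : ∀ u : ℝ, u ^ p * exp (b * u) * exp (a * u) = u ^ p * exp ((a + b) * u) := by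
    intro u; rw [mul_assoc, ← exp_add]; ring_nf
  simp only [hexp, integral_same, zero_mul, sub_zero] at parts
  rw [← intervalIntegral.integral_const_mul, mul_comm (exp (a * t)), ← parts]
  exact integral_congr fun s _ => by ring

lemma integral_exp_mul_exp_mul_abs_sub_rpow (hp : -1 < p) (θ : ℝ) {s t : ℝ}
    (hs : 0 ≤ s) (hst : s ≤ t) :
    ∫ r in (0:ℝ)..t, exp (θ * s) * exp (θ * r) * |s - r| ^ p =
      exp (2 * θ * s) * ((∫ u in (0:ℝ)..s, u ^ p * exp (-θ * u)) +
        ∫ u in (0:ℝ)..(t - s), u ^ p * exp (θ * u)) := by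
  have reflect : ∫ u in (s - t)..0, |u| ^ p * exp (-θ * u) =
      ∫ u in (0:ℝ)..(t - s), u ^ p * exp (θ * u) := by
    rw [← integral_abs_rpow_mul_exp_of_nonneg θ (sub_nonneg.mpr hst),
      ← neg_sub t s, ← neg_zero, ← integral_comp_neg]
    simp only [abs_neg, neg_mul, mul_neg, neg_neg, neg_zero]
  calc ∫ r in (0:ℝ)..t, exp (θ * s) * exp (θ * r) * |s - r| ^ p
      = ∫ r in (0:ℝ)..t, exp (2 * θ * s) * (|s - r| ^ p * exp (-θ * (s - r))) :=
        integral_congr fun r _ => by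
          rw [mul_left_comm, mul_comm, ← exp_add, ← exp_add]; ring_nf
    _ = exp (2 * θ * s) * ∫ u in (s - t)..s, |u| ^ p * exp (-θ * u) := by
        rw [intervalIntegral.integral_const_mul,
          integral_comp_sub_left (fun u => |u| ^ p * exp (-θ * u)), sub_zero]
    _ = exp (2 * θ * s) * ((∫ u in (s - t)..0, |u| ^ p * exp (-θ * u)) +
          ∫ u in (0:ℝ)..s, |u| ^ p * exp (-θ * u)) := by
        rw [integral_add_adjacent_intervals (intervalIntegrable_abs_rpow_mul_exp hp _ _ _)
          (intervalIntegrable_abs_rpow_mul_exp hp _ _ _)]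
    _ = _ := by
        rw [reflect, integral_abs_rpow_mul_exp_of_nonneg (-θ) hs, add_comm]

lemma mul_integral_integral_exp_mul_exp_mul_abs_sub_rpow (hp : -1 < p) (θ : ℝ) {t : ℝ}
    (ht : 0 ≤ t) :
    θ * ∫ s in (0:ℝ)..t, ∫ r in (0:ℝ)..t, exp (θ * s) * exp (θ * r) * |s - r| ^ p =
      exp (2 * θ * t) * (∫ u in (0:ℝ)..t, u ^ p * exp (-θ * u)) -
        ∫ u in (0:ℝ)..t, u ^ p * exp (θ * u) := by
  have split : ∫ s in (0:ℝ)..t, ∫ r in (0:ℝ)..t, exp (θ * s) * exp (θ * r) * |s - r| ^ p =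
      (∫ s in (0:ℝ)..t, exp (2 * θ * s) * ∫ u in (0:ℝ)..s, u ^ p * exp (-θ * u)) +
        ∫ s in (0:ℝ)..t, exp (2 * θ * s) * ∫ u in (0:ℝ)..(t - s), u ^ p * exp (θ * u) := by
    have hF_neg := continuous_integral_rpow_mul_exp hp (-θ)
    have hF_pos := continuous_integral_rpow_mul_exp hp θ
    rw [← integral_add ((by fun_prop : Continuous _).intervalIntegrable 0 t)
      ((by fun_prop : Continuous _).intervalIntegrable 0 t)]
    refine integral_congr fun s hs => ?_
    rw [uIcc_of_le ht] at hs
    rw [integral_exp_mul_exp_mul_abs_sub_rpow hp θ hs.1 hs.2, mul_add]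
  have reflect :
      ∫ s in (0:ℝ)..t, exp (2 * θ * s) * ∫ u in (0:ℝ)..(t - s), u ^ p * exp (θ * u) =
        exp (2 * θ * t) *
          ∫ s in (0:ℝ)..t, exp (-2 * θ * s) * ∫ u in (0:ℝ)..s, u ^ p * exp (θ * u) := by
    have := integral_comp_sub_left (a := 0) (b := t)
      (fun s => exp (2 * θ * t) * (exp (-2 * θ * s) * ∫ u in (0:ℝ)..s, u ^ p * exp (θ * u))) t
    rw [sub_zero, sub_self] at this
    rw [← intervalIntegral.integral_const_mul, ← this]
    refine integral_congr fun s _ => ?_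
    rw [← mul_assoc, ← exp_add]
    ring_nf
  have parts_left := mul_integral_exp_mul_integral_rpow_mul_exp hp (2 * θ) (-θ) t
  have parts_right := mul_integral_exp_mul_integral_rpow_mul_exp hp (-2 * θ) θ t
  rw [show 2 * θ + -θ = θ by ring] at parts_left
  rw [show -2 * θ + θ = -θ by ring] at parts_right
  have hexp : exp (2 * θ * t) * exp (-2 * θ * t) = 1 := by
    rw [← exp_add, ← exp_zero]; ring_nf
  rw [split, reflect]
  linear_combination parts_left / 2 - exp (2 * θ * t) * parts_right / 2
    - (∫ u in (0:ℝ)..t, u ^ p * exp (θ * u)) * hexp / 2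

end

theorem double_integral_exp_identity_general
    (H θ : ℝ) (hH1 : 1 / 2 < H) (hθ : 0 < θ) :
    ∀ t : ℝ, 0 < t →
      H * (2 * H - 1) * Real.exp (-2 * θ * t) *
          ∫ s in (0:ℝ)..t, ∫ r in (0:ℝ)..t,
            Real.exp (θ * s) * Real.exp (θ * r) * |s - r| ^ (2 * H - 2) =
        (H * (2 * H - 1) / θ) *
          ((∫ r in (0:ℝ)..t, r ^ (2 * H - 2) * Real.exp (-θ * r)) -
            Real.exp (-2 * θ * t) * ∫ r in (0:ℝ)..t, r ^ (2 * H - 2) * Real.exp (θ * r)) := by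
  intro t ht
  have key := mul_integral_integral_exp_mul_exp_mul_abs_sub_rpow
    (p := 2 * H - 2) (by linarith) θ ht.le
  have hexp : exp (-2 * θ * t) * exp (2 * θ * t) = 1 := by
    rw [← exp_add, ← exp_zero]; ring_nf
  rw [div_mul_eq_mul_div, eq_div_iff hθ.ne']
  linear_combination H * (2 * H - 1) * exp (-2 * θ * t) * key
    + H * (2 * H - 1) * (∫ r in (0:ℝ)..t, r ^ (2 * H - 2) * exp (-θ * r)) * hexp

/-- For `1/2 < H < 1`, `θ > 0` and every `t > 0`,
`H(2H−1) e^{−2θt} ∫_0^t ∫_0^t e^{θs} e^{θr} |s−r|^{2H−2} dr ds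
  = (H(2H−1)/θ) (∫_0^t r^{2H−2} e^{−θr} dr − e^{−2θt} ∫_0^t r^{2H−2} e^{θr} dr)`. -/
theorem double_integral_exp_identity
    (H θ : ℝ) (hH1 : 1 / 2 < H) (hH2 : H < 1) (hθ : 0 < θ) :
    ∀ t : ℝ, 0 < t →
      H * (2 * H - 1) * Real.exp (-2 * θ * t) *
          ∫ s in (0:ℝ)..t, ∫ r in (0:ℝ)..t,
            Real.exp (θ * s) * Real.exp (θ * r) * |s - r| ^ (2 * H - 2) =
        (H * (2 * H - 1) / θ) *
          ((∫ r in (0:ℝ)..t, r ^ (2 * H - 2) * Real.exp (-θ * r)) -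
            Real.exp (-2 * θ * t) * ∫ r in (0:ℝ)..t, r ^ (2 * H - 2) * Real.exp (θ * r)) :=
  double_integral_exp_identity_general H θ hH1 hθ
end
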